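/- arXiv:1307.1299 — 5 statements merged into one kernel-verified Lean document; each statement's English description precedes it below -/
import Mathlib

section
/- Let A be an N×N {0,1}-matrix, X̄_A its two-sided Markov shift with shift σ̄_A, X_A the one-sided shift with shift σ_A, and ρ : X̄_A → X_A the restriction map. The map ξ ↦ ξ ∘ ρ induces an injective group homomorphism from H^A = C(X_A, ℤ)/{ξ − ξ∘σ_A} to H̄^A = C(X̄_A, ℤ)/{ζ − ζ∘σ̄_A}: if ξ ∘ ρ = ζ − ζ ∘ σ̄_A for some continuous ζ : X̄_A → ℤ, then ξ = η − η ∘ σ_A for some continuous η : X_A → ℤ. -/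
/-- The one-sided topological Markov shift of a matrix `A`. -/
def oneSided {N : ℕ} (A : Matrix (Fin N) (Fin N) ℕ) : Set (ℕ → Fin N) :=
  {x | ∀ n, A (x n) (x (n + 1)) = 1}

/-- The two-sided topological Markov shift of a matrix `A`. -/
def twoSided {N : ℕ} (A : Matrix (Fin N) (Fin N) ℕ) : Set (ℤ → Fin N) :=
  {x | ∀ n : ℤ, A (x n) (x (n + 1)) = 1}

/-- The one-sided shift map on `X_A`. -/
def sigmaS {N : ℕ} (A : Matrix (Fin N) (Fin N) ℕ) (x : oneSided A) : oneSided A :=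
  ⟨fun n => x.1 (n + 1), fun n => x.2 (n + 1)⟩

/-- The two-sided shift map on `X̄_A`. -/
def sigmaBarS {N : ℕ} (A : Matrix (Fin N) (Fin N) ℕ) (x : twoSided A) : twoSided A :=
  ⟨fun n => x.1 (n + 1), fun n => by simpa [add_assoc] using x.2 (n + 1)⟩

/-- The factor map `ρ : X̄_A → X_A`, restriction to positive coordinates. -/
def rhoS {N : ℕ} (A : Matrix (Fin N) (Fin N) ℕ) (x : twoSided A) : oneSided A :=
  ⟨fun n => x.1 ((n : ℤ) + 1), fun n => by
    have h := x.2 ((n : ℤ) + 1)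
    convert h using 3
    simp⟩

/-!
Telescoping the coboundary equation along the shift gives
`ζ x = ∑_{k<m} ξ (σ_A^k (ρ x)) + ζ (σ̄_A^m x)`. Being locally constant on a compact space, `ζ`
depends on finitely many coordinates, so for large `m` the function `ζ ∘ σ̄_A^m`, and hence `ζ`
itself, depends only on finitely many coordinates of `ρ x`. A point `y ∈ X_A` need not lie in the
image of `ρ`, but `σ_A^N y` does: by pigeonhole `y_0, …, y_N` contains a loop, which can be run
backwards forever. With such a lift `x_y`, `ρ x_y = σ_A^N y`, the function
`η y = ∑_{k<N} ξ (σ_A^k y) + ζ x_y` is locally constant and satisfies `ξ = η - η ∘ σ_A`.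
-/

open Function Topology

section Birkhoff

variable {α β G : Type*} [AddCommGroup G]

theorem birkhoffSum_eq_sub_of_eq_sub {f : α → α} {g h : α → G} (hg : ∀ x, g x = h x - h (f x))
    (n : ℕ) (x : α) : birkhoffSum f g n x = h x - h (f^[n] x) := by
  induction n with
  | zero => simp
  | succ n ih => rw [birkhoffSum_succ, ih, hg, iterate_succ_apply']; abel

theorem Function.Semiconj.birkhoffSum_apply {π : α → β} {f : α → α} {g : β → β}
    (h : Semiconj π f g) (φ : β → G) (n : ℕ) (x : α) :
    birkhoffSum g φ n (π x) = birkhoffSum f (φ ∘ π) n x := by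
  simp only [birkhoffSum, comp_apply, (h.iterate_right _).eq]

end Birkhoff

theorem exists_int_chain_extension {α : Type*} (R : α → α → Prop) (u : ℕ → α)
    (hu : ∀ n, R (u n) (u (n + 1))) {p : ℕ} (hp : 0 < p) (hper : u p = u 0) :
    ∃ v : ℤ → α, (∀ t, R (v t) (v (t + 1))) ∧ ∀ n : ℕ, v n = u n := by
  -- negative indices run periodically through the loop `u 0, …, u (p - 1)`
  refine ⟨fun t => if 0 ≤ t then u t.toNat else u (t % p).toNat, fun t => ?_, fun n => by simp⟩
  rcases le_or_gt 0 t with ht | ht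
  · simp only [if_pos ht, if_pos (by omega : 0 ≤ t + 1), show (t + 1).toNat = t.toNat + 1 by omega]
    exact hu _
  · have hnext : (if 0 ≤ t + 1 then u (t + 1).toNat else u ((t + 1) % p).toNat) =
        u ((t + 1) % p).toNat := by
      split_ifs with h
      · rw [show t + 1 = 0 by omega]
        simp
      · rfl
    simp only [if_neg ht.not_ge, hnext]
    have hq0 := Int.emod_nonneg t (by omega : (p : ℤ) ≠ 0)
    have hqp := Int.emod_lt_of_pos t (by omega : (0 : ℤ) < p)
    rw [← Int.emod_add_emod]
    rcases (by omega : t % p + 1 < p ∨ t % p + 1 = p) with h | h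
    · rw [Int.emod_eq_of_lt (by omega) h, show (t % p + 1).toNat = (t % p).toNat + 1 by omega]
      exact hu _
    · rw [h, Int.emod_self, show (t % p).toNat = p - 1 by omega]
      simpa [Nat.sub_add_cancel hp, hper] using hu (p - 1)

section Cylinders

variable {ι Y : Type*} {K : ι → Type*} [∀ i, TopologicalSpace (K i)] [TopologicalSpace Y]

theorem IsCompact.exists_finset_eq_of_continuous [DiscreteTopology Y] {X : Set (∀ i, K i)}
    (hX : IsCompact X) {f : X → Y} (hf : Continuous f) :
    ∃ s : Finset ι, ∀ x y : X, (∀ i ∈ s, x.1 i = y.1 i) → f x = f y := by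
  classical
  have hloc : ∀ x : X, ∃ (I : Finset ι) (t : ∀ i, Set (K i)), (∀ i, t i ∈ 𝓝 (x.1 i)) ∧
      ∀ y : X, y.1 ∈ (I : Set ι).pi t → f y = f x := by
    intro x
    obtain ⟨u, hu, hsub⟩ := (mem_nhds_subtype X x _).1
      (hf.continuousAt ((isOpen_discrete {f x}).mem_nhds rfl))
    rw [nhds_pi, Filter.mem_pi'] at hu
    obtain ⟨I, t, ht, hIt⟩ := hu
    exact ⟨I, t, ht, fun y hy => hsub (hIt hy)⟩
  choose I t ht hIt using hloc
  obtain ⟨c, hc⟩ := hX.elim_nhds_subcover' (fun x hx => (I ⟨x, hx⟩ : Set ι).pi (t ⟨x, hx⟩))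
    fun x hx => set_pi_mem_nhds (I _).finite_toSet fun i _ => ht ⟨x, hx⟩ i
  refine ⟨c.sup I, fun y z hyz => ?_⟩
  obtain ⟨x, hxc, hyx⟩ : ∃ x ∈ c, y.1 ∈ (I x : Set ι).pi (t x) := by simpa using hc y.2
  have hzx : z.1 ∈ (I x : Set ι).pi (t x) := fun i hi =>
    hyz i (Finset.mem_sup.2 ⟨x, hxc, hi⟩) ▸ hyx i hi
  rw [hIt x y hyx, hIt x z hzx]

theorem continuous_of_forall_eq_of_finset [∀ i, DiscreteTopology (K i)] {X : Set (∀ i, K i)}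
    {f : X → Y} (s : Finset ι) (hf : ∀ x y : X, (∀ i ∈ s, x.1 i = y.1 i) → f x = f y) :
    Continuous f := by
  refine IsLocallyConstant.continuous ((IsLocallyConstant.iff_eventually_eq f).2 fun x => ?_)
  have hcoord : ∀ᶠ y in 𝓝 x, ∀ i ∈ s, y.1 i = x.1 i := (Filter.eventually_all_finset s).2
    fun i _ => ((continuous_apply i).comp continuous_subtype_val).continuousAt.eventually_mem
      ((isOpen_discrete {x.1 i}).mem_nhds rfl)
  exact hcoord.mono fun y hy => hf y x hy

end Cylinders

section MarkovShift

variable {N : ℕ} (A : Matrix (Fin N) (Fin N) ℕ)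

theorem isClosed_setOf_forall_adjacent {ι : Type*} [Add ι] [One ι] :
    IsClosed {x : ι → Fin N | ∀ n, A (x n) (x (n + 1)) = 1} := by
  have hA : Continuous fun p : Fin N × Fin N => A p.1 p.2 := continuous_of_discreteTopology
  simp only [Set.ofPred_forall]
  exact isClosed_iInter fun n => isClosed_eq
    (hA.comp (by fun_prop : Continuous fun x : ι → Fin N => (x n, x (n + 1)))) continuous_const

theorem isCompact_oneSided : IsCompact (oneSided A) :=
  (isClosed_setOf_forall_adjacent A).isCompact

theorem isCompact_twoSided : IsCompact (twoSided A) :=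
  (isClosed_setOf_forall_adjacent A).isCompact

theorem sigmaS_iterate_apply (k : ℕ) (y : oneSided A) (n : ℕ) :
    ((sigmaS A)^[k] y).1 n = y.1 (n + k) := by
  induction k generalizing y with
  | zero => rfl
  | succ k ih => rw [iterate_succ_apply, ih]; exact congrArg y.1 (by omega)

theorem sigmaBarS_iterate_apply (k : ℕ) (x : twoSided A) (i : ℤ) :
    ((sigmaBarS A)^[k] x).1 i = x.1 (i + k) := by
  induction k generalizing x with
  | zero => simp
  | succ k ih => rw [iterate_succ_apply, ih, sigmaBarS]; push_cast; ring_nf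

theorem semiconj_rhoS : Semiconj (rhoS A) (sigmaBarS A) (sigmaS A) := fun _ => rfl

theorem rhoS_apply (x : twoSided A) (n : ℕ) : (rhoS A x).1 n = x.1 (n + 1) := rfl

theorem exists_rhoS_eq_iterate_sigmaS (y : oneSided A) :
    ∃ x : twoSided A, rhoS A x = (sigmaS A)^[N] y := by
  obtain ⟨a, b, hab, hy⟩ :=
    Fintype.exists_ne_map_eq_of_card_lt (fun k : Fin (N + 1) => y.1 k) (by simp)
  obtain ⟨i, j, hij, hjN, hyij⟩ : ∃ i j : ℕ, i < j ∧ j ≤ N ∧ y.1 i = y.1 j := by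
    rcases Fin.lt_or_lt_of_ne hab with h | h
    exacts [⟨a, b, h, by omega, hy⟩, ⟨b, a, h, by omega, hy.symm⟩]
  obtain ⟨v, hv, hvy⟩ := exists_int_chain_extension (fun a b => A a b = 1)
    (fun n => y.1 (n + i)) (fun n => by simpa [add_right_comm] using y.2 (n + i))
    (Nat.sub_pos_of_lt hij) (by simp [Nat.sub_add_cancel hij.le, hyij])
  refine ⟨⟨fun t => v (t + N - 1 - i), fun t => ?_⟩, ?_⟩
  · convert hv (t + N - 1 - i) using 3
    ring
  refine Subtype.ext (funext fun n => ?_)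
  rw [rhoS_apply, sigmaS_iterate_apply]
  show v (n + 1 + N - 1 - i) = y.1 (n + N)
  rw [show (n : ℤ) + 1 + N - 1 - i = ((n + N - i : ℕ) : ℤ) by omega, hvy]
  exact congrArg y.1 (by omega)

def DependsOnIic {β : Type*} (f : oneSided A → β) (L : ℕ) : Prop :=
  ∀ ⦃y y' : oneSided A⦄, (∀ n ≤ L, y.1 n = y'.1 n) → f y = f y'

namespace DependsOnIic

variable {A} {β : Type*} {f : oneSided A → β} {L : ℕ}

theorem mono (hf : DependsOnIic A f L) {L' : ℕ} (h : L ≤ L') : DependsOnIic A f L' :=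
  fun _ _ hy => hf fun n hn => hy n (hn.trans h)

theorem comp_iterate_sigmaS (hf : DependsOnIic A f L) (k : ℕ) :
    DependsOnIic A (f ∘ (sigmaS A)^[k]) (L + k) := fun y y' hy => hf fun n hn => by
  simpa only [sigmaS_iterate_apply] using hy (n + k) (by omega)

theorem birkhoffSum_sigmaS [AddCommMonoid β] (hf : DependsOnIic A f L) (n : ℕ) :
    DependsOnIic A (birkhoffSum (sigmaS A) f n) (L + n) := fun _ _ hy =>
  Finset.sum_congr rfl fun k hk =>
    (hf.comp_iterate_sigmaS k).mono (by simp only [Finset.mem_range] at hk; omega) hy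

protected theorem continuous [TopologicalSpace β] (hf : DependsOnIic A f L) : Continuous f :=
  continuous_of_forall_eq_of_finset (Finset.range (L + 1)) fun _ _ h =>
    hf fun n hn => h n (Finset.mem_range.2 (by omega))

end DependsOnIic

theorem Continuous.exists_dependsOnIic {β : Type*} [TopologicalSpace β] [DiscreteTopology β]
    {f : oneSided A → β} (hf : Continuous f) : ∃ L, DependsOnIic A f L := by
  obtain ⟨s, hs⟩ := (isCompact_oneSided A).exists_finset_eq_of_continuous hf
  exact ⟨s.sup id, fun y y' h => hs y y' fun n hn => h n (Finset.le_sup (f := id) hn)⟩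

theorem Continuous.exists_iterate_sigmaBarS_eq_of_rhoS {β : Type*} [TopologicalSpace β]
    [DiscreteTopology β] {ζ : twoSided A → β} (hζ : Continuous ζ) :
    ∃ m L, ∀ x x' : twoSided A, (∀ n ≤ L, (rhoS A x).1 n = (rhoS A x').1 n) →
      ζ ((sigmaBarS A)^[m] x) = ζ ((sigmaBarS A)^[m] x') := by
  obtain ⟨s, hs⟩ := (isCompact_twoSided A).exists_finset_eq_of_continuous hζ
  set M := s.sup Int.natAbs
  -- after `M + 1` shifts every coordinate read by `ζ` is a coordinate of `ρ x`
  refine ⟨M + 1, 2 * M, fun x x' h => hs _ _ fun i hi => ?_⟩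
  have hiM : i.natAbs ≤ M := Finset.le_sup (f := Int.natAbs) hi
  have hcoord : ∀ z : twoSided A, ((sigmaBarS A)^[M + 1] z).1 i = (rhoS A z).1 (i + M).toNat :=
    fun z => by rw [sigmaBarS_iterate_apply, rhoS_apply]; exact congrArg z.1 (by omega)
  rw [hcoord, hcoord]
  exact h _ (by omega)

theorem exists_eq_of_rhoS_eq_of_coboundary {ξ : oneSided A → ℤ} {ζ : twoSided A → ℤ}
    (hξ : Continuous ξ) (hζ : Continuous ζ)
    (hcob : ∀ x, ξ (rhoS A x) = ζ x - ζ (sigmaBarS A x)) :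
    ∃ L, ∀ x x' : twoSided A, (∀ n ≤ L, (rhoS A x).1 n = (rhoS A x').1 n) → ζ x = ζ x' := by
  obtain ⟨m, L, hm⟩ := hζ.exists_iterate_sigmaBarS_eq_of_rhoS A
  obtain ⟨Lξ, hLξ⟩ := hξ.exists_dependsOnIic A
  have hsplit : ∀ x, ζ x = birkhoffSum (sigmaS A) ξ m (rhoS A x) + ζ ((sigmaBarS A)^[m] x) :=
    fun x => by
      rw [(semiconj_rhoS A).birkhoffSum_apply, birkhoffSum_eq_sub_of_eq_sub (g := ξ ∘ rhoS A) hcob]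
      abel
  refine ⟨max L (Lξ + m), fun x x' h => ?_⟩
  rw [hsplit x, hsplit x', hLξ.birkhoffSum_sigmaS m fun n hn => h n (le_max_of_le_right hn),
    hm x x' fun n hn => h n (le_max_of_le_left hn)]

end MarkovShift

theorem stmt7_general {N : ℕ} (A : Matrix (Fin N) (Fin N) ℕ)
    (ξ : oneSided A → ℤ) (hξ : Continuous ξ)
    (h : ∃ ζ : twoSided A → ℤ, Continuous ζ ∧
      ∀ x : twoSided A, ξ (rhoS A x) = ζ x - ζ (sigmaBarS A x)) :
    ∃ η : oneSided A → ℤ, Continuous η ∧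
      ∀ y : oneSided A, ξ y = η y - η (sigmaS A y) := by
  obtain ⟨ζ, hζ, hcob⟩ := h
  obtain ⟨L, hL⟩ := exists_eq_of_rhoS_eq_of_coboundary A hξ hζ hcob
  obtain ⟨Lξ, hLξ⟩ := hξ.exists_dependsOnIic A
  choose lift hlift using exists_rhoS_eq_iterate_sigmaS A
  refine ⟨fun y => birkhoffSum (sigmaS A) ξ N y + ζ (lift y), ?_, fun y => ?_⟩
  · refine DependsOnIic.continuous (L := Lξ + N + (L + N)) fun y y' h => ?_
    congr 1
    · exact (hLξ.birkhoffSum_sigmaS N).mono (by omega) h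
    · refine hL _ _ fun n hn => ?_
      simpa only [hlift, sigmaS_iterate_apply] using h (n + N) (by omega)
  · have hshift : ζ (lift (sigmaS A y)) = ζ (sigmaBarS A (lift y)) := by
      refine hL _ _ fun n _ => congrArg (fun z : oneSided A => z.1 n) ?_
      rw [semiconj_rhoS A (lift y), hlift, hlift, ← iterate_succ_apply, iterate_succ_apply']
    have hcob_lift := hcob (lift y)
    rw [hlift] at hcob_lift
    have hbirkhoff := birkhoffSum_apply_sub_birkhoffSum (sigmaS A) ξ N y
    linarith

theorem stmt7 {N : ℕ} (A : Matrix (Fin N) (Fin N) ℕ)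
    (hA : ∀ i j, A i j = 0 ∨ A i j = 1)
    (ξ : oneSided A → ℤ) (hξ : Continuous ξ)
    (h : ∃ ζ : twoSided A → ℤ, Continuous ζ ∧
      ∀ x : twoSided A, ξ (rhoS A x) = ζ x - ζ (sigmaBarS A x)) :
    ∃ η : oneSided A → ℤ, Continuous η ∧
      ∀ y : oneSided A, ξ y = η y - η (sigmaS A y) :=
  stmt7_general A ξ hξ h
end

section
/- Let A be an N×N matrix with nonnegative integer entries such that A(1,1) = 2, A(i,i) ≥ 2 for all i, and A(i,j) = 1 for i ≠ j. Set d_i = A(i,i) − 2 and let r = |{i | d_i = 0}| − 1. Then the Bowen-Franks group ℤ^N/(I − Aᵗ)ℤ^N is isomorphic as an abelian group to ℤ^r ⊕ ⨁_{i : d_i ≥ 2} ℤ/d_iℤ. -/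
/-!
Because every off-diagonal entry of `A` is `1`, we have `Aᵀ - 1 = J + diag d` with `J` the
all-ones matrix, and `d 0 = 0`, so column `0` of `J + diag d` is the all-ones vector.
Subtracting column `0` from the other columns, then row `0` from the other rows, turns
`J + diag d` into `diag d'`, where `d'` is `d` with `d' 0 = 1`. Both steps are unimodular,
so the Bowen-Franks group is `∏ i, ℤ ⧸ (d' i)`. Here an entry `0` gives a factor `ℤ`, an
entry `1` the trivial group, and an entry `n ≥ 2` gives `ZMod n`. The number of zero
entries drops by one when `d` is replaced by `d'`.
-/

open Matrix

section Cokernel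

variable {R ι : Type*} [CommRing R] [Fintype ι] [DecidableEq ι]

theorem Matrix.range_toLin'_diagonal (d : ι → R) :
    LinearMap.range (toLin' (diagonal d)) = Submodule.pi Set.univ fun i => Ideal.span {d i} := by
  apply le_antisymm
  · rintro _ ⟨x, rfl⟩ i -
    simpa [mulVec_diagonal] using Ideal.mul_mem_right (x i) _ (Ideal.mem_span_singleton_self (d i))
  · intro y hy
    choose x hx using fun i => Ideal.mem_span_singleton'.mp (hy i trivial)
    exact ⟨x, funext fun i => by simp [mulVec_diagonal, ← hx i, mul_comm]⟩

noncomputable def Matrix.quotientRangeDiagonalEquiv (d : ι → R) :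
    ((ι → R) ⧸ LinearMap.range (toLin' (diagonal d))) ≃ₗ[R] ∀ i, R ⧸ Ideal.span {d i} :=
  Submodule.quotEquivOfEq _ _ (range_toLin'_diagonal d) ≪≫ₗ Submodule.quotientPi _

theorem Matrix.range_toLin'_mul_mul (P M Q : Matrix ι ι R) [Invertible Q] :
    LinearMap.range (toLin' (P * M * Q)) = (LinearMap.range (toLin' M)).map (toLin' P) := by
  have hQ : LinearMap.range (toLin' Q) = ⊤ :=
    LinearMap.range_eq_top.mpr (toLinearEquiv' Q inferInstance).surjective
  rw [toLin'_mul, toLin'_mul, LinearMap.range_comp_of_range_eq_top _ hQ, LinearMap.range_comp]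

noncomputable def Matrix.quotientRangeMulMulEquiv (P M Q : Matrix ι ι R) [Invertible P]
    [Invertible Q] :
    ((ι → R) ⧸ LinearMap.range (toLin' (P * M * Q))) ≃ₗ[R]
      ((ι → R) ⧸ LinearMap.range (toLin' M)) :=
  (Submodule.Quotient.equiv _ _ (toLinearEquiv' P inferInstance)
    (range_toLin'_mul_mul P M Q).symm).symm

theorem Matrix.range_toLin'_neg (M : Matrix ι ι R) :
    LinearMap.range (toLin' (-M)) = LinearMap.range (toLin' M) := by
  rw [map_neg, LinearMap.range_neg]

theorem Matrix.one_add_vecMulVec_mul_one_sub {u v : ι → R} (h : v ⬝ᵥ u = 0) :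
    (1 + vecMulVec u v) * (1 - vecMulVec u v) = 1 := by
  rw [add_mul, mul_sub, mul_sub, vecMulVec_mul_vecMulVec]
  simp [h]

theorem Matrix.ones_add_diagonal_eq_mul_diagonal_update_mul (d : ι → R) {z : ι} (hz : d z = 0) :
    of (fun _ _ => 1) + diagonal d =
      (1 + vecMulVec (1 - Pi.single z 1) (Pi.single z 1)) * diagonal (Function.update d z 1) *
        (1 + vecMulVec (Pi.single z 1) (1 - Pi.single z 1)) := by
  ext i j
  by_cases hi : i = z <;> by_cases hj : j = z <;>
    simp [Matrix.mul_apply, vecMulVec_apply, diagonal_apply, Pi.single_apply, one_apply,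
      Function.update_apply, add_mul, mul_add, Finset.sum_add_distrib, hi, hj, hz,
      eq_comm (a := z), add_comm]

noncomputable def Matrix.quotientRangeOnesAddDiagonalEquiv (d : ι → R) {z : ι} (hz : d z = 0) :
    ((ι → R) ⧸ LinearMap.range (toLin' (of (fun _ _ => 1) + diagonal d))) ≃ₗ[R]
      ∀ i, R ⧸ Ideal.span {Function.update d z 1 i} :=
  letI := invertibleOfRightInverse _ _ (one_add_vecMulVec_mul_one_sub (u := 1 - Pi.single z 1)
    (v := (Pi.single z 1 : ι → R)) (by simp))
  letI := invertibleOfRightInverse _ _ (one_add_vecMulVec_mul_one_sub (u := Pi.single z 1)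
    (v := 1 - (Pi.single z 1 : ι → R)) (by simp))
  Submodule.quotEquivOfEq _ _ (by rw [ones_add_diagonal_eq_mul_diagonal_update_mul d hz]) ≪≫ₗ
    quotientRangeMulMulEquiv _ _ _ ≪≫ₗ quotientRangeDiagonalEquiv _

end Cokernel

theorem Matrix.one_sub_transpose_eq_neg_ones_add_diagonal {R ι : Type*} [Ring R] [DecidableEq ι]
    (A : Matrix ι ι R)
    (hoff : ∀ i j, i ≠ j → A i j = 1) (d : ι → R) (hd : ∀ i, d i = A i i - 2) :
    1 - Aᵀ = -(of (fun _ _ => 1) + diagonal d) := by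
  ext i j
  by_cases hij : i = j
  · subst hij
    simp only [Matrix.sub_apply, one_apply_eq, transpose_apply, Matrix.neg_apply,
      Matrix.add_apply, of_apply, diagonal_apply_eq, hd, ← one_add_one_eq_two]
    abel
  · simp [hij, hoff j i (Ne.symm hij)]

def AddEquiv.piEquivPiSubtypeProdOfSubsingleton {ι : Type*} {G : ι → Type*}
    [∀ i, AddZeroClass (G i)] (p q : ι → Prop) [DecidablePred p] [DecidablePred q]
    (hpq : ∀ i, p i → ¬ q i) (h : ∀ i, ¬ p i → ¬ q i → Subsingleton (G i)) :
    (∀ i, G i) ≃+ (∀ i : {i // p i}, G i) × (∀ i : {i // q i}, G i) where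
  toFun f := (fun i => f i, fun i => f i)
  invFun g i := if hp : p i then g.1 ⟨i, hp⟩ else if hq : q i then g.2 ⟨i, hq⟩ else 0
  left_inv f := funext fun i => by
    by_cases hp : p i
    · simp [hp]
    by_cases hq : q i
    · simp [hp, hq]
    have := h i hp hq
    simp [hp, hq, Subsingleton.elim (f i) 0]
  right_inv g := by
    ext ⟨i, hi⟩
    · simp [hi]
    · simp [hi, mt (hpq i) (not_not.mpr hi)]
  map_add' _ _ := rfl

theorem Finset.filter_update_eq_zero {ι M : Type*} [Fintype ι] [DecidableEq ι] [Zero M]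
    [DecidableEq M] (f : ι → M) (z : ι) {c : M} (hc : c ≠ 0) :
    (univ.filter fun i => Function.update f z c i = 0) =
      (univ.filter fun i => f i = 0).erase z := by
  ext i
  by_cases hi : i = z <;> simp [hi, hc]

noncomputable def Int.quotientSpanEquivZModToNat {n : ℤ} (hn : 0 ≤ n) :
    ℤ ⧸ Ideal.span {n} ≃+* ZMod n.toNat :=
  (Int.quotientSpanEquivZMod n).trans (ZMod.ringEquivCongr (by omega))

noncomputable def Int.piQuotientSpanUpdateEquiv {ι : Type*} [DecidableEq ι] (d : ι → ℤ)
    (hd : ∀ i, 0 ≤ d i) {z : ι} (hz : d z < 2) :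
    (∀ i, ℤ ⧸ Ideal.span {Function.update d z 1 i}) ≃+
      ({i // Function.update d z 1 i = 0} → ℤ) × (∀ i : {i // 2 ≤ d i}, ZMod (d i).toNat) :=
  have hne : ∀ i, 2 ≤ d i → i ≠ z := by rintro i hi rfl; omega
  have hone : ∀ i, Function.update d z 1 i ≠ 0 → ¬ 2 ≤ d i → Function.update d z 1 i = 1 := by
    intro i h0 h2
    by_cases hi : i = z
    · simp [hi]
    · have := hd i
      simp only [Function.update_of_ne hi] at h0 ⊢
      omega
  (AddEquiv.piEquivPiSubtypeProdOfSubsingleton _ (fun i => 2 ≤ d i)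
    (fun i h0 h2 => by rw [Function.update_of_ne (hne i h2)] at h0; omega)
    (fun i h0 h2 => Ideal.Quotient.subsingleton_iff.mpr (by simp [hone i h0 h2]))).trans <|
  AddEquiv.prodCongr
    (AddEquiv.piCongrRight fun i =>
      (Submodule.quotEquivOfEqBot _ (Ideal.span_singleton_eq_bot.mpr i.2)).toAddEquiv)
    (AddEquiv.piCongrRight fun i =>
      ((Ideal.quotEquivOfEq (by rw [Function.update_of_ne (hne i i.2)])).trans
        (quotientSpanEquivZModToNat (hd i))).toAddEquiv)

theorem stmt14_general {N : ℕ} (hN : 0 < N) (A : Matrix (Fin N) (Fin N) ℤ)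
    (h11 : A ⟨0, hN⟩ ⟨0, hN⟩ = 2)
    (hdiag : ∀ i, 2 ≤ A i i)
    (hoff : ∀ i j, i ≠ j → A i j = 1)
    (d : Fin N → ℤ) (hd : ∀ i, d i = A i i - 2)
    (r : ℕ) (hr : r = (Finset.univ.filter fun i => d i = 0).card - 1) :
    Nonempty (((Fin N → ℤ) ⧸ LinearMap.range (Matrix.toLin' (1 - Aᵀ))) ≃+
      ((Fin r → ℤ) × ((i : {i : Fin N // 2 ≤ d i}) → ZMod (d i.1).toNat))) := by
  classical
  set z : Fin N := ⟨0, hN⟩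
  have hdz : d z = 0 := by rw [hd, h11, sub_self]
  have hd_nonneg : ∀ i, 0 ≤ d i := fun i => by linarith [hd i, hdiag i]
  have hrange : LinearMap.range (toLin' (1 - Aᵀ)) =
      LinearMap.range (toLin' (of (fun _ _ => 1) + diagonal d)) := by
    rw [one_sub_transpose_eq_neg_ones_add_diagonal A hoff d hd, range_toLin'_neg]
  have hcard : Fintype.card {i // Function.update d z 1 i = 0} = r := by
    rw [Fintype.card_subtype, Finset.filter_update_eq_zero d z one_ne_zero,
      Finset.card_erase_of_mem (by simpa using hdz), hr]
  exact ⟨(Submodule.quotEquivOfEq _ _ hrange ≪≫ₗ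
      quotientRangeOnesAddDiagonalEquiv d hdz).toAddEquiv.trans <|
    (Int.piQuotientSpanUpdateEquiv d hd_nonneg (by omega)).trans <|
    AddEquiv.prodCongr
      (LinearEquiv.funCongrLeft ℤ ℤ (Fintype.equivFinOfCardEq hcard).symm).toAddEquiv
      (AddEquiv.refl _)⟩

theorem stmt14 {N : ℕ} (hN : 0 < N) (A : Matrix (Fin N) (Fin N) ℤ)
    (hpos : ∀ i j, 0 ≤ A i j)
    (h11 : A ⟨0, hN⟩ ⟨0, hN⟩ = 2)
    (hdiag : ∀ i, 2 ≤ A i i)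
    (hoff : ∀ i j, i ≠ j → A i j = 1)
    (d : Fin N → ℤ) (hd : ∀ i, d i = A i i - 2)
    (r : ℕ) (hr : r = (Finset.univ.filter fun i => d i = 0).card - 1) :
    Nonempty (((Fin N → ℤ) ⧸ LinearMap.range (Matrix.toLin' (1 - Aᵀ))) ≃+
      ((Fin r → ℤ) × ((i : {i : Fin N // 2 ≤ d i}) → ZMod (d i.1).toNat))) :=
  stmt14_general hN A h11 hdiag hoff d hd r hr
end

section
/- Let A be an N×N matrix with nonnegative integer entries, c_1, …, c_N ∈ ℕ, and let Σ = {(i,j) | 1 ≤ i ≤ N, 0 ≤ j ≤ c_i}. Define the Σ×Σ matrix B by B((i,j),(k,l)) = A(i,k) if j = c_i and l = 0, B((i,j),(k,l)) = 1 if i = k and j + 1 = l, and 0 otherwise. Then det(I − A) = det(I − B). -/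
open Matrix Finset

namespace Stmt15Aux

lemma sum_ind {n : ℕ} (f : Fin n → ℤ) (x : Fin n) (hx : ∀ l, l ≠ x → f l = 0) :
    ∑ l, f l = f x :=
  Finset.sum_eq_single_of_mem x (mem_univ x) (fun l _ h => hx l h)

lemma sum_ind2 {n : ℕ} (f : Fin n → ℤ) (x y : Fin n) (hxy : x ≠ y)
    (h : ∀ l, l ≠ x → l ≠ y → f l = 0) : ∑ l, f l = f x + f y := by
  classical
  rw [← Finset.sum_subset (Finset.subset_univ ({x, y} : Finset (Fin n)))
    (fun l _ hl => h l (fun e => hl (by simp [e])) (fun e => hl (by simp [e])))]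
  exact Finset.sum_pair hxy

section
variable {N : ℕ} {c : Fin N → ℕ}

def U (c : Fin N → ℕ) : Matrix ((i : Fin N) × Fin (c i + 1)) ((i : Fin N) × Fin (c i + 1)) ℤ :=
  fun p q => if p.1 = q.1 ∧ p.2.val ≤ q.2.val then 1 else 0

def M (A : Matrix (Fin N) (Fin N) ℤ) (c : Fin N → ℕ) :
    Matrix ((i : Fin N) × Fin (c i + 1)) ((i : Fin N) × Fin (c i + 1)) ℤ :=
  fun p q => (if p = q then 1 else 0) - (if q.2.val = 0 then A p.1 q.1 else 0)

lemma detU : (U c).det = 1 := by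
  have h : (U c).BlockTriangular (fun p => p.2.val) := by
    rintro ⟨pi, pj⟩ ⟨qi, qj⟩ hlt
    simp only [U]
    rw [if_neg]
    rintro ⟨h1, h2⟩
    simp only at hlt
    omega
  rw [h.det]
  apply Finset.prod_eq_one
  intro k hk
  have he : (U c).toSquareBlock (fun p => p.2.val) k = 1 := by
    ext ⟨⟨pi, pj⟩, hp⟩ ⟨⟨qi, qj⟩, hq⟩
    simp only at hp hq
    simp only [Matrix.toSquareBlock_def, U, Matrix.one_apply, Subtype.mk.injEq, Sigma.ext_iff]
    by_cases hiq : pi = qi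
    · subst hiq
      have : pj = qj := Fin.ext (hp.trans hq.symm)
      subst this
      simp
    · simp [hiq]
  rw [he, Matrix.det_one]

lemma detM (A : Matrix (Fin N) (Fin N) ℤ) : (M A c).det = (1 - A).det := by
  classical
  rcases Nat.eq_zero_or_pos N with h0 | h0
  · subst h0
    rw [Matrix.det_isEmpty, Matrix.det_isEmpty]
  · rw [← Matrix.det_transpose (M A c)]
    have h : (M A c)ᵀ.BlockTriangular (fun p => p.2.val) := by
      rintro ⟨pi, pj⟩ ⟨qi, qj⟩ hlt
      simp only at hlt
      simp only [Matrix.transpose_apply, M]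
      rw [if_neg (fun e => by cases e; omega), if_neg (by omega)]
      ring
    rw [h.det]
    have hmem : (0 : ℕ) ∈ image (fun p : (i : Fin N) × Fin (c i + 1) => p.2.val) univ :=
      Finset.mem_image.2 ⟨⟨⟨0, h0⟩, ⟨0, Nat.succ_pos _⟩⟩, mem_univ _, rfl⟩
    rw [Finset.prod_eq_single_of_mem 0 hmem]
    · -- block 0
      set e : {p : (i : Fin N) × Fin (c i + 1) // p.2.val = 0} ≃ Fin N :=
        { toFun := fun p => p.1.1
          invFun := fun i => ⟨⟨i, ⟨0, Nat.succ_pos _⟩⟩, rfl⟩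
          left_inv := by
            rintro ⟨⟨i, j⟩, hj⟩
            simp only at hj
            have : j = ⟨0, Nat.succ_pos _⟩ := Fin.ext hj
            subst this
            rfl
          right_inv := fun i => rfl } with he
      have hblock : (M A c)ᵀ.toSquareBlock (fun p => p.2.val) 0
          = ((1 - A)ᵀ).submatrix e e := by
        ext ⟨⟨pi, pj⟩, hp⟩ ⟨⟨qi, qj⟩, hq⟩
        simp only at hp hq
        simp only [Matrix.toSquareBlock_def, Matrix.transpose_apply, Matrix.of_apply,
          Matrix.submatrix_apply, M, he, Equiv.coe_fn_mk, Matrix.sub_apply, Matrix.one_apply]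
        rw [if_pos hp]
        by_cases hiq : qi = pi
        · subst hiq
          have : qj = pj := Fin.ext (hq.trans hp.symm)
          subst this
          simp
        · rw [if_neg (fun e => by cases e; exact hiq rfl), if_neg hiq]
      rw [hblock, Matrix.det_submatrix_equiv_self, Matrix.det_transpose]
    · intro k hk hk0
      have he : (M A c)ᵀ.toSquareBlock (fun p => p.2.val) k = 1 := by
        ext ⟨⟨pi, pj⟩, hp⟩ ⟨⟨qi, qj⟩, hq⟩
        simp only at hp hq
        simp only [Matrix.toSquareBlock_def, Matrix.transpose_apply, Matrix.of_apply, M,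
          Matrix.one_apply, Subtype.mk.injEq]
        rw [if_neg (show ¬ (pj : ℕ) = 0 by omega), sub_zero]
        by_cases hiq : qi = pi
        · subst hiq
          have : qj = pj := Fin.ext (hq.trans hp.symm)
          subst this
          simp
        · rw [if_neg (fun e => by cases e; exact hiq rfl),
            if_neg (by simp only [Sigma.ext_iff]; rintro ⟨h1, -⟩; exact hiq h1.symm)]
      rw [he, Matrix.det_one]

lemma mulU (A : Matrix (Fin N) (Fin N) ℤ)
    (B : Matrix ((i : Fin N) × Fin (c i + 1)) ((i : Fin N) × Fin (c i + 1)) ℤ)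
    (hB : ∀ p q, B p q = if p.2.val = c p.1 ∧ q.2.val = 0 then A p.1 q.1
        else if p.1 = q.1 ∧ p.2.val + 1 = q.2.val then 1 else 0) :
    U c * (1 - B) = M A c := by
  ext ⟨pi, pj⟩ ⟨qi, qj⟩
  rw [Matrix.mul_apply, ← Finset.univ_sigma_univ, Finset.sum_sigma]
  rw [Finset.sum_eq_single pi]
  rotate_left
  · intro i _ hi
    apply Finset.sum_eq_zero
    intro l _
    simp [U, Ne.symm hi]
  · simp
  simp only [U, M, Matrix.sub_apply, Matrix.one_apply, hB, true_and]
  by_cases hiq : pi = qi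
  · subst hiq
    simp only [Sigma.ext_iff, heq_eq_eq, true_and]
    by_cases hq0 : (qj : ℕ) = 0
    · simp only [hq0, and_true, Nat.succ_ne_zero, and_false, if_false]
      by_cases hc : c pi = 0
      · refine (sum_ind _ qj ?_).trans ?_
        · intro l hl
          have h1 := l.isLt
          exact absurd (Fin.ext (by omega)) hl
        · have hpl := pj.isLt
          have hpj : pj = qj := Fin.ext (by omega)
          subst hpj
          simp [hq0, hc]
      · refine (sum_ind2 _ qj (Fin.last (c pi)) ?_ ?_).trans ?_
        · intro e
          have := congrArg Fin.val e
          simp only [Fin.val_last] at this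
          omega
        · intro l hl hl2
          have h1 := l.isLt
          rw [if_neg hl, if_neg (fun e : (l : ℕ) = c pi =>
            hl2 (Fin.ext (by simp only [Fin.val_last]; omega)))]
          ring
        · have hle := Fin.is_le pj
          simp only [Fin.val_last, Fin.ext_iff, hq0]
          split_ifs <;> (first | ring1 | omega | (exfalso; omega))
    · simp only [hq0, and_false, if_false]
      have hq1 := qj.isLt
      refine (sum_ind2 _ qj (⟨(qj : ℕ) - 1, by omega⟩ : Fin (c pi + 1))
        (fun e => by have := congrArg Fin.val e; simp only at this; omega) ?_).trans ?_
      · intro l hl hl2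
        rw [if_neg hl, if_neg (fun e : (l : ℕ) + 1 = (qj : ℕ) =>
          hl2 (Fin.ext (by simp only; omega)))]
        ring
      · simp only [Fin.ext_iff]
        split_ifs <;> (first | ring1 | omega | (exfalso; omega))
  · simp only [Sigma.ext_iff, hiq, false_and, if_false]
    by_cases hq0 : (qj : ℕ) = 0
    · simp only [hq0, and_true]
      refine (sum_ind _ (Fin.last (c pi)) ?_).trans ?_
      · intro l hl
        have h1 := l.isLt
        rw [if_neg (fun e : (l : ℕ) = c pi =>
          hl (Fin.ext (by simp only [Fin.val_last]; omega)))]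
        ring
      · have hle := Fin.is_le pj
        simp only [Fin.val_last]
        split_ifs <;> (first | ring1 | omega | (exfalso; omega))
    · simp only [hq0, and_false, if_false]
      simp

end
end Stmt15Aux

theorem stmt15 {N : ℕ} (A : Matrix (Fin N) (Fin N) ℤ)
    (hpos : ∀ i j, 0 ≤ A i j)
    (c : Fin N → ℕ)
    (B : Matrix ((i : Fin N) × Fin (c i + 1)) ((i : Fin N) × Fin (c i + 1)) ℤ)
    (hB : ∀ p q : (i : Fin N) × Fin (c i + 1),
      B p q = if p.2.val = c p.1 ∧ q.2.val = 0 then A p.1 q.1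
        else if p.1 = q.1 ∧ p.2.val + 1 = q.2.val then 1 else 0) :
    (1 - A).det = (1 - B).det := by
  have h1 := Stmt15Aux.detM (c := c) A
  have h2 := Stmt15Aux.mulU (c := c) A B hB
  have h3 := Stmt15Aux.detU (c := c)
  calc (1 - A).det = (Stmt15Aux.M A c).det := h1.symm
    _ = (Stmt15Aux.U c * (1 - B)).det := by rw [h2]
    _ = (Stmt15Aux.U c).det * (1 - B).det := Matrix.det_mul _ _
    _ = (1 - B).det := by rw [h3, one_mul]
end

section
/- Let A, B and Σ be as in the state-expansion construction: A is an N×N nonnegative integer matrix, c_1,…,c_N ∈ ℕ, Σ = {(i,j) | 1 ≤ i ≤ N, 0 ≤ j ≤ c_i}, and B((i,j),(k,l)) = A(i,k) if j = c_i, l = 0; = 1 if i = k, j+1 = l; = 0 otherwise. Then there is an isomorphism Φ : ℤ^N/(I − Aᵗ)ℤ^N → ℤ^Σ/(I − Bᵗ)ℤ^Σ of abelian groups sending the class of (c_1 + 1, c_2 + 1, …, c_N + 1) to the class of the all-ones vector u_B, where Φ sends the class of the standard basis vector e_i to the class of f_{i,0}. -/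
/-!
The isomorphism is induced by `e_i ↦ f_{i,0}`; its inverse is induced by summing over the
fibres, `f_{i,j} ↦ e_i`. One composite is the identity on the nose; the other is the identity
modulo the relations of `B`, because `headEmbedding (fiberSum y) - y` is `(1 - Bᵀ) w` for the
tail sums `w (i, j) = ∑_{l > j} y (i, l)`. The fibre sums of `u_B` are the `c_i + 1`, which
gives the image of `(c_1 + 1, …, c_N + 1)`.
-/

open Matrix Finset

variable {R ι : Type*} [CommRing R]

section BowenFranks

variable [Fintype ι] [DecidableEq ι]

abbrev bowenFranksRelations (M : Matrix ι ι R) : Submodule R (ι → R) :=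
  LinearMap.range (toLin' (1 - Mᵀ))

theorem mem_bowenFranksRelations {M : Matrix ι ι R} {x : ι → R} :
    x ∈ bowenFranksRelations M ↔ ∃ w, w - w ᵥ* M = x := by
  simp [toLin'_apply, mulVec_transpose]

end BowenFranks

def Matrix.stateExpansion [DecidableEq ι] (A : Matrix ι ι R) (c : ι → ℕ) :
    Matrix (Σ i, Fin (c i + 1)) (Σ i, Fin (c i + 1)) R := Matrix.of fun p q =>
  if p.2.val = c p.1 ∧ q.2.val = 0 then A p.1 q.1
  else if p.1 = q.1 ∧ p.2.val + 1 = q.2.val then 1 else 0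

namespace StateExpansion

variable (c : ι → ℕ)

def headEmbedding : (ι → R) →ₗ[R] (Σ i, Fin (c i + 1)) → R :=
  LinearMap.pi fun p => if p.2 = 0 then LinearMap.proj p.1 else 0

def fiberSum : ((Σ i, Fin (c i + 1)) → R) →ₗ[R] ι → R :=
  LinearMap.pi fun i => ∑ j, LinearMap.proj ⟨i, j⟩

@[simp]
theorem headEmbedding_apply_zero (x : ι → R) (i : ι) : headEmbedding c x ⟨i, 0⟩ = x i := by
  simp [headEmbedding]

@[simp]
theorem headEmbedding_apply_succ (x : ι → R) (i : ι) (j : Fin (c i)) :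
    headEmbedding c x ⟨i, j.succ⟩ = 0 := by
  simp [headEmbedding]

@[simp]
theorem fiberSum_apply (y : (Σ i, Fin (c i + 1)) → R) (i : ι) :
    fiberSum c y i = ∑ j, y ⟨i, j⟩ := by
  simp [fiberSum]

theorem fiberSum_headEmbedding (x : ι → R) : fiberSum c (headEmbedding c x) = x := by
  ext i
  simp [Fin.sum_univ_succ]

theorem fiberSum_one : fiberSum c (1 : (Σ i, Fin (c i + 1)) → R) = fun i => (c i : R) + 1 := by
  ext i
  simp

variable [DecidableEq ι]

theorem headEmbedding_single (i : ι) (r : R) :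
    headEmbedding c (Pi.single i r) = Pi.single ⟨i, 0⟩ r := by
  ext ⟨k, l⟩
  by_cases hk : k = i
  · subst hk
    induction l using Fin.cases <;> simp [Fin.succ_ne_zero]
  · induction l using Fin.cases <;> simp [hk]

variable [Fintype ι] (A : Matrix ι ι R)

theorem vecMul_stateExpansion_zero (w : (Σ i, Fin (c i + 1)) → R) (i : ι) :
    (w ᵥ* A.stateExpansion c) ⟨i, 0⟩ = ((fun k => w ⟨k, Fin.last (c k)⟩) ᵥ* A) i := by
  rw [vecMul, vecMul, dotProduct, dotProduct, Fintype.sum_sigma]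
  refine Fintype.sum_congr _ _ fun k => ?_
  rw [Fintype.sum_eq_single (Fin.last (c k))]
  · simp [stateExpansion]
  · intro j hj
    have : j.val ≠ c k := fun h => hj (Fin.ext h)
    simp [stateExpansion, this]

theorem vecMul_stateExpansion_succ (w : (Σ i, Fin (c i + 1)) → R) (i : ι) (j : Fin (c i)) :
    (w ᵥ* A.stateExpansion c) ⟨i, j.succ⟩ = w ⟨i, j.castSucc⟩ := by
  rw [vecMul, dotProduct, Fintype.sum_eq_single ⟨i, j.castSucc⟩]
  · simp [stateExpansion]
  · rintro ⟨k, l⟩ h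
    rw [stateExpansion, of_apply, if_neg (by simp), if_neg, mul_zero]
    rintro ⟨rfl, hl⟩
    exact h (congrArg (Sigma.mk k) (Fin.ext (by simpa using hl)))

theorem headEmbedding_sub_vecMul (v : ι → R) :
    headEmbedding c (v - v ᵥ* A) =
      (fun p => v p.1) - (fun p => v p.1) ᵥ* A.stateExpansion c := by
  ext ⟨i, j⟩
  induction j using Fin.cases <;>
    simp [vecMul_stateExpansion_zero, vecMul_stateExpansion_succ]

theorem fiberSum_sub_vecMul (w : (Σ i, Fin (c i + 1)) → R) :
    fiberSum c (w - w ᵥ* A.stateExpansion c) =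
      (fun k => w ⟨k, Fin.last (c k)⟩) - (fun k => w ⟨k, Fin.last (c k)⟩) ᵥ* A := by
  ext i
  simp only [fiberSum_apply, Pi.sub_apply, Finset.sum_sub_distrib]
  rw [Fin.sum_univ_succ (fun j => (w ᵥ* A.stateExpansion c) ⟨i, j⟩), Fin.sum_univ_castSucc]
  simp only [vecMul_stateExpansion_zero, vecMul_stateExpansion_succ]
  ring

theorem headEmbedding_fiberSum_sub_self (y : (Σ i, Fin (c i + 1)) → R) :
    headEmbedding c (fiberSum c y) - y =
      (fun p => ∑ l ∈ Ioi p.2, y ⟨p.1, l⟩) -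
        (fun p => ∑ l ∈ Ioi p.2, y ⟨p.1, l⟩) ᵥ* A.stateExpansion c := by
  ext ⟨i, j⟩
  induction j using Fin.cases with
  | zero =>
    simp [vecMul_stateExpansion_zero, Fin.sum_univ_succ, ← Fin.top_eq_last, ← Pi.zero_def]
  | succ j =>
    have : Ioi j.castSucc = Ici j.succ := by ext; simp [Fin.castSucc_lt_iff_succ_le]
    simp [vecMul_stateExpansion_succ, this, ← Finset.add_sum_Ioi_eq_sum_Ici]

theorem bowenFranksRelations_le_comap_headEmbedding :
    bowenFranksRelations A ≤
      (bowenFranksRelations (A.stateExpansion c)).comap (headEmbedding c) := fun x hx => by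
  obtain ⟨v, rfl⟩ := mem_bowenFranksRelations.mp hx
  exact mem_bowenFranksRelations.mpr ⟨_, (headEmbedding_sub_vecMul c A v).symm⟩

theorem bowenFranksRelations_le_comap_fiberSum :
    bowenFranksRelations (A.stateExpansion c) ≤
      (bowenFranksRelations A).comap (fiberSum c) := fun y hy => by
  obtain ⟨w, rfl⟩ := mem_bowenFranksRelations.mp hy
  exact mem_bowenFranksRelations.mpr ⟨_, (fiberSum_sub_vecMul c A w).symm⟩

def bowenFranksEquiv :
    ((ι → R) ⧸ bowenFranksRelations A) ≃ₗ[R]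
      ((Σ i, Fin (c i + 1)) → R) ⧸ bowenFranksRelations (A.stateExpansion c) :=
  LinearEquiv.ofLinearMap
    (Submodule.mapQ _ _ (headEmbedding c) (bowenFranksRelations_le_comap_headEmbedding c A))
    (Submodule.mapQ _ _ (fiberSum c) (bowenFranksRelations_le_comap_fiberSum c A))
    (Submodule.linearMap_qext _ <| LinearMap.ext fun y => (Submodule.Quotient.eq _).mpr <|
      mem_bowenFranksRelations.mpr ⟨_, (headEmbedding_fiberSum_sub_self c A y).symm⟩)
    (Submodule.linearMap_qext _ <| LinearMap.ext fun x =>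
      congrArg Submodule.Quotient.mk (fiberSum_headEmbedding c x))

theorem bowenFranksEquiv_mk (x : ι → R) :
    bowenFranksEquiv c A (Submodule.Quotient.mk x) = Submodule.Quotient.mk (headEmbedding c x) :=
  rfl

theorem bowenFranksEquiv_symm_mk (y : (Σ i, Fin (c i + 1)) → R) :
    (bowenFranksEquiv c A).symm (Submodule.Quotient.mk y) =
      Submodule.Quotient.mk (fiberSum c y) :=
  rfl

end StateExpansion

theorem stmt16_general {N : ℕ} (A : Matrix (Fin N) (Fin N) ℤ)
    (c : Fin N → ℕ)
    (B : Matrix ((i : Fin N) × Fin (c i + 1)) ((i : Fin N) × Fin (c i + 1)) ℤ)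
    (hB : ∀ p q : (i : Fin N) × Fin (c i + 1),
      B p q = if p.2.val = c p.1 ∧ q.2.val = 0 then A p.1 q.1
        else if p.1 = q.1 ∧ p.2.val + 1 = q.2.val then 1 else 0) :
    ∃ Φ : ((Fin N → ℤ) ⧸ LinearMap.range (Matrix.toLin' (1 - Aᵀ))) ≃+
        ((((i : Fin N) × Fin (c i + 1)) → ℤ) ⧸
          LinearMap.range (Matrix.toLin' (1 - Bᵀ))),
      Φ (Submodule.Quotient.mk fun i => (c i : ℤ) + 1) =
        Submodule.Quotient.mk (fun _ => 1) ∧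
      ∀ i : Fin N,
        Φ (Submodule.Quotient.mk (Pi.single i 1)) =
          Submodule.Quotient.mk (Pi.single ⟨i, 0⟩ 1) := by
  obtain rfl : B = A.stateExpansion c := Matrix.ext hB
  let Φ := StateExpansion.bowenFranksEquiv c A
  refine ⟨Φ.toAddEquiv, ?_, fun i => ?_⟩
  · rw [← StateExpansion.fiberSum_one c, ← StateExpansion.bowenFranksEquiv_symm_mk c A]
    exact Φ.apply_symm_apply (Submodule.Quotient.mk 1)
  · exact (StateExpansion.bowenFranksEquiv_mk c A _).trans
      (congrArg _ (StateExpansion.headEmbedding_single c i 1))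

theorem stmt16 {N : ℕ} (A : Matrix (Fin N) (Fin N) ℤ)
    (hpos : ∀ i j, 0 ≤ A i j)
    (c : Fin N → ℕ)
    (B : Matrix ((i : Fin N) × Fin (c i + 1)) ((i : Fin N) × Fin (c i + 1)) ℤ)
    (hB : ∀ p q : (i : Fin N) × Fin (c i + 1),
      B p q = if p.2.val = c p.1 ∧ q.2.val = 0 then A p.1 q.1
        else if p.1 = q.1 ∧ p.2.val + 1 = q.2.val then 1 else 0) :
    ∃ Φ : ((Fin N → ℤ) ⧸ LinearMap.range (Matrix.toLin' (1 - Aᵀ))) ≃+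
        ((((i : Fin N) × Fin (c i + 1)) → ℤ) ⧸
          LinearMap.range (Matrix.toLin' (1 - Bᵀ))),
      Φ (Submodule.Quotient.mk fun i => (c i : ℤ) + 1) =
        Submodule.Quotient.mk (fun _ => 1) ∧
      ∀ i : Fin N,
        Φ (Submodule.Quotient.mk (Pi.single i 1)) =
          Submodule.Quotient.mk (Pi.single ⟨i, 0⟩ 1) :=
  stmt16_general A c B hB
end

section
/- For every finitely generated abelian group F, every element u ∈ F, and every s ∈ {−1, 0, 1} such that s = 0 if and only if F is infinite, there exists a square matrix A with nonnegative integer entries, irreducible (i.e. for all indices i, j there exists m ≥ 1 with (A^m)(i,j) > 0), such that ℤ^n/(I − Aᵗ)ℤ^n ≅ F via an isomorphism carrying the class of the all-ones vector to u, and the sign of det(I − A) equals s. -/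
/-!
Present `F` as `ρ : ℤ^N ↠ F` with `ρ (1, …, 1) = u`, using the generators `f`, `-f` and `u`
for a generating family `f`, so that `ker ρ` contains a vector `x` with all coordinates negative.
Write `ker ρ` as the column span of a square matrix `G`: `det G = 0` exactly when `F` is
infinite, and negating a column fixes the sign otherwise. Bordering `G` by the column `(x, -1)`
and the row `(0, -1)` presents `F` on one more generator, and adding large multiples of the new
column (which is negative) to the others makes every entry negative without changing the column
span or the determinant. For such a matrix `M`, `A = 1 - Mᵀ` is positive and `1 - Aᵀ = M`.
-/

open Matrix LinearMap

namespace Matrix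

section CommRing

variable {ι R : Type*} [Fintype ι] [CommRing R]

theorem range_toLin'_mul_of_isUnit [DecidableEq ι] {m : Type*} (P : Matrix m ι R)
    {U : Matrix ι ι R} (hU : IsUnit U) : range (toLin' (P * U)) = range (toLin' P) := by
  rw [toLin'_mul, range_comp_of_range_eq_top]
  exact range_eq_top.mpr (mulVec_surjective_iff_isUnit.mpr hU)

theorem range_toLin'_reindex [DecidableEq ι] {κ : Type*} [Fintype κ] [DecidableEq κ]
    (e : ι ≃ κ) (M : Matrix ι ι R) :
    range (toLin' (reindex e e M)) =
      (range (toLin' M)).map (LinearEquiv.funCongrLeft R R e.symm).toLinearMap := by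
  rw [toLin'_reindex, range_comp, range_comp_of_range_eq_top]
  exact (LinearEquiv.funCongrLeft R R e).range

theorem add_vecMulVec_col_eq_mul [DecidableEq ι] (P : Matrix ι ι R) (j : ι) (k : ι → R) :
    P + vecMulVec (P.col j) k = P * (1 + vecMulVec (Pi.single j 1) k) := by
  rw [Matrix.mul_add, mul_one, mul_vecMulVec, mulVec_single_one]

theorem det_one_add_vecMulVec_single [DecidableEq ι] (j : ι) (k : ι → R) :
    (1 + vecMulVec (Pi.single j 1) k).det = 1 + k j := by
  rw [vecMulVec_eq Unit, det_one_add_replicateCol_mul_replicateRow, dotProduct_single_one]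

theorem det_add_vecMulVec_col [DecidableEq ι] (P : Matrix ι ι R) {j : ι} {k : ι → R}
    (hk : k j = 0) : (P + vecMulVec (P.col j) k).det = P.det := by
  rw [add_vecMulVec_col_eq_mul, det_mul, det_one_add_vecMulVec_single, hk, add_zero, mul_one]

theorem range_toLin'_add_vecMulVec_col [DecidableEq ι] (P : Matrix ι ι R) {j : ι} {k : ι → R}
    (hk : k j = 0) : range (toLin' (P + vecMulVec (P.col j) k)) = range (toLin' P) := by
  refine add_vecMulVec_col_eq_mul P j k ▸ range_toLin'_mul_of_isUnit P ?_
  rw [isUnit_iff_isUnit_det, det_one_add_vecMulVec_single, hk, add_zero]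
  exact isUnit_one

theorem fromBlocks_replicateCol_neg_one_mulVec (G : Matrix ι ι R) (x : ι → R)
    (y : ι ⊕ Unit → R) :
    fromBlocks G (replicateCol Unit x) (0 : Matrix Unit ι R) (-1) *ᵥ y =
      Sum.elim (G *ᵥ (y ∘ Sum.inl) + y (Sum.inr ()) • x) (fun _ => -y (Sum.inr ())) := by
  ext (i | i) <;> simp [replicateCol, mulVec, dotProduct, mul_comm]

theorem det_fromBlocks_replicateCol_neg_one [DecidableEq ι] (G : Matrix ι ι R) (x : ι → R) :
    (fromBlocks G (replicateCol Unit x) (0 : Matrix Unit ι R) (-1)).det = -G.det := by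
  rw [det_fromBlocks_zero₂₁, det_unique (-1 : Matrix Unit Unit R)]
  simp

theorem range_toLin'_fromBlocks_replicateCol_neg_one [DecidableEq ι] (G : Matrix ι ι R)
    {x : ι → R} (hx : x ∈ range (toLin' G)) :
    range (toLin' (fromBlocks G (replicateCol Unit x) (0 : Matrix Unit ι R) (-1))) =
      (range (toLin' G)).comap (funLeft R R Sum.inl) := by
  obtain ⟨c, rfl⟩ := hx
  ext z
  simp only [mem_range, Submodule.mem_comap, toLin'_apply, fromBlocks_replicateCol_neg_one_mulVec]
  constructor
  · rintro ⟨y, rfl⟩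
    exact ⟨y ∘ Sum.inl + y (Sum.inr ()) • c, by rw [mulVec_add, mulVec_smul]; rfl⟩
  · rintro ⟨a, ha⟩
    refine ⟨Sum.elim (a + z (Sum.inr ()) • c) (fun _ => -z (Sum.inr ())), ?_⟩
    ext (i | i)
    · simp [mulVec_add, mulVec_smul, ha]
    · simp

end CommRing

section Int

variable {ι : Type*} [Fintype ι] [DecidableEq ι]

theorem exists_range_toLin'_eq (K : Submodule ℤ (ι → ℤ)) :
    ∃ G : Matrix ι ι ℤ, range (toLin' G) = K := by
  obtain ⟨k, b⟩ := K.basisOfPid (Pi.basisFun ℤ ι)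
  have hk : Fintype.card (Fin k) ≤ Fintype.card ι := by
    simpa [← Module.finrank_eq_card_basis b] using K.finrank_le
  obtain ⟨f⟩ := Function.Embedding.nonempty_of_card_le hk
  let g : ι → K := Function.extend f b 0
  have hg : Submodule.span ℤ (Set.range g) = ⊤ := by
    refine eq_top_iff.mpr (b.span_eq ▸ Submodule.span_mono ?_)
    rintro _ ⟨j, rfl⟩
    exact ⟨f j, f.injective.extend_apply _ _ _⟩
  refine ⟨of fun i j => (g j : ι → ℤ) i, ?_⟩
  rw [range_toLin']
  change Submodule.span ℤ (Set.range (K.subtype ∘ g)) = K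
  rw [Set.range_comp, ← Submodule.map_span, hg, Submodule.map_top, Submodule.range_subtype]

theorem det_ne_zero_iff_finite_quotient_range (G : Matrix ι ι ℤ) :
    G.det ≠ 0 ↔ Finite ((ι → ℤ) ⧸ range (toLin' G)) := by
  rw [Submodule.finiteQuotient_iff, Module.finrank_fintype_fun_eq_card]
  refine ⟨rank_of_det_ne_zero, fun hrank hdet => ?_⟩
  obtain ⟨v, hv, hGv⟩ := exists_mulVec_eq_zero_iff.mpr hdet
  have : Nontrivial (ker (toLin' G)) := ⟨⟨⟨v, hGv⟩, 0, fun h => hv (congrArg Subtype.val h)⟩⟩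
  have hker := Module.finrank_pos (R := ℤ) (M := ker (toLin' G))
  have hsum := (ker (toLin' G)).finrank_quotient_add_finrank
  rw [(toLin' G).quotKerEquivRange.finrank_eq, Module.finrank_fintype_fun_eq_card] at hsum
  exact absurd hrank (by omega)

theorem exists_range_toLin'_eq_sign_det [Nonempty ι] (K : Submodule ℤ (ι → ℤ)) {s : ℤ}
    (hs : s = -1 ∨ s = 0 ∨ s = 1) (hsK : s = 0 ↔ Infinite ((ι → ℤ) ⧸ K)) :
    ∃ G : Matrix ι ι ℤ, range (toLin' G) = K ∧ G.det.sign = s := by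
  obtain ⟨G, rfl⟩ := exists_range_toLin'_eq K
  by_cases h0 : G.det = 0
  · have : Infinite ((ι → ℤ) ⧸ range (toLin' G)) :=
      not_finite_iff_infinite.mp fun h => (G.det_ne_zero_iff_finite_quotient_range.mpr h) h0
    exact ⟨G, rfl, by rw [h0, Int.sign_zero, hsK.mpr this]⟩
  have hs0 : s ≠ 0 := fun h =>
    (hsK.mp h).not_finite (G.det_ne_zero_iff_finite_quotient_range.mp h0)
  by_cases hGs : G.det.sign = s
  · exact ⟨G, rfl, hGs⟩
  obtain ⟨j⟩ := ‹Nonempty ι›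
  let D : Matrix ι ι ℤ := diagonal (Function.update 1 j (-1))
  have hD : D.det = -1 := by simp [D, det_diagonal, Finset.prod_update_of_mem]
  refine ⟨G * D, range_toLin'_mul_of_isUnit G ?_, ?_⟩
  · rw [isUnit_iff_isUnit_det, hD]
    exact isUnit_one.neg
  rw [det_mul, hD, mul_neg_one, Int.sign_neg]
  rcases lt_or_gt_of_ne h0 with h | h
  · rw [Int.sign_eq_neg_one_of_neg h] at hGs ⊢; omega
  · rw [Int.sign_eq_one_of_pos h] at hGs ⊢; omega

theorem exists_add_mul_neg {m n : Type*} [Fintype m] (B : Matrix m n ℤ) {v : m → ℤ}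
    (hv : ∀ i, v i < 0) : ∃ k : n → ℤ, ∀ i j, B i j + v i * k j < 0 := by
  refine ⟨fun j => ∑ i, |B i j| + 1, fun i j => ?_⟩
  have hB : B i j ≤ ∑ i, |B i j| :=
    (le_abs_self _).trans
      (Finset.single_le_sum (fun i _ => abs_nonneg (B i j)) (Finset.mem_univ i))
  have hv' : v i + 1 ≤ 0 := hv i
  nlinarith [(Finset.sum_nonneg fun i _ => abs_nonneg (B i j) : 0 ≤ ∑ i, |B i j|)]

theorem exists_neg_matrix_range_toLin'_eq_comap (G : Matrix ι ι ℤ) {x : ι → ℤ}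
    (hxG : x ∈ range (toLin' G)) (hx : ∀ i, x i < 0) :
    ∃ M : Matrix (ι ⊕ Unit) (ι ⊕ Unit) ℤ, (∀ i j, M i j < 0) ∧ M.det = -G.det ∧
      range (toLin' M) = (range (toLin' G)).comap (funLeft ℤ ℤ Sum.inl) := by
  set P := fromBlocks G (replicateCol Unit x) (0 : Matrix Unit ι ℤ) (-1)
  have hv : ∀ i, P.col (Sum.inr ()) i < 0 := by
    rintro (i | i) <;> simp [P, hx]
  obtain ⟨k, hk⟩ := exists_add_mul_neg (P.submatrix _root_.id Sum.inl) hv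
  refine ⟨P + vecMulVec (P.col (Sum.inr ())) (Sum.elim k 0), ?_, ?_, ?_⟩
  · rintro i (j | j)
    · simpa [vecMulVec] using hk i j
    · simpa [vecMulVec] using hv i
  · rw [det_add_vecMulVec_col P rfl, det_fromBlocks_replicateCol_neg_one]
  · rw [range_toLin'_add_vecMulVec_col P rfl,
      range_toLin'_fromBlocks_replicateCol_neg_one G hxG]

end Int

end Matrix

theorem exists_surjective_one_eq_neg_mem_ker {F ι : Type*} [AddCommGroup F]
    (π : (ι → ℤ) →ₗ[ℤ] F) (hπ : Function.Surjective π) (u : F) :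
    ∃ ρ : ((ι ⊕ ι) ⊕ Unit → ℤ) →ₗ[ℤ] F, Function.Surjective ρ ∧ ρ 1 = u ∧
      ∃ x ∈ ker ρ, ∀ i, x i < 0 := by
  obtain ⟨c, rfl⟩ := hπ u
  let ρ := π ∘ₗ funLeft ℤ ℤ (Sum.inl ∘ Sum.inl) - π ∘ₗ funLeft ℤ ℤ (Sum.inl ∘ Sum.inr) +
    (proj (Sum.inr ())).smulRight (π c)
  have hρ : ∀ y, ρ y = π (y ∘ Sum.inl ∘ Sum.inl) - π (y ∘ Sum.inl ∘ Sum.inr) +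
      y (Sum.inr ()) • π c := fun y => rfl
  refine ⟨ρ, fun f => ?_, ?_, Sum.elim (Sum.elim (fun i => min (c i) 0 - 1)
    (fun i => -max (c i) 0 - 1)) (fun _ => -1), ?_, ?_⟩
  · obtain ⟨a, rfl⟩ := hπ f
    exact ⟨Sum.elim (Sum.elim a 0) 0, by simp [hρ, Function.comp_def, ← Pi.zero_def]⟩
  · simp [hρ]
  · rw [mem_ker, hρ, ← map_sub]
    convert (show π c + (-1 : ℤ) • π c = 0 by simp) using 3
    · ext i
      simp only [Function.comp_apply, Sum.elim_inl, Sum.elim_inr, Pi.sub_apply]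
      omega
    · rfl
  · rintro ((i | i) | i) <;> simp; omega

theorem exists_pos_fin_matrix_of_neg {F κ : Type*} [AddCommGroup F] [Fintype κ] [DecidableEq κ]
    (M : Matrix κ κ ℤ) (hM : ∀ i j, M i j < 0) (ρ : (κ → ℤ) →ₗ[ℤ] F)
    (hρ : Function.Surjective ρ) (hMρ : range (toLin' M) = ker ρ) :
    ∃ (n : ℕ) (A : Matrix (Fin n) (Fin n) ℤ), (∀ i j, 0 < A i j) ∧
      (1 - A).det.sign = M.det.sign ∧
      ∃ Φ : ((Fin n → ℤ) ⧸ range (toLin' (1 - Aᵀ))) ≃+ F,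
        Φ (Submodule.Quotient.mk fun _ => 1) = ρ 1 := by
  let e := Fintype.equivFin κ
  let M' := reindex e e M
  let ρ' := ρ ∘ₗ (LinearEquiv.funCongrLeft ℤ ℤ e.symm).symm.toLinearMap
  have hρ' : Function.Surjective ρ' := hρ.comp (LinearEquiv.surjective _)
  have hM'ρ' : range (toLin' (1 - (1 - M'ᵀ)ᵀ)) = ker ρ' := by
    rw [transpose_sub, transpose_one, transpose_transpose, sub_sub_cancel, range_toLin'_reindex,
      hMρ, Submodule.map_equiv_eq_comap_symm, ker_comp]
  refine ⟨_, 1 - M'ᵀ, fun i j => ?_, ?_, ?_⟩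
  · have := hM (e.symm j) (e.symm i)
    simp only [Matrix.sub_apply, one_apply, transpose_apply, M', reindex_apply, submatrix_apply]
    split_ifs <;> omega
  · rw [sub_sub_cancel, det_transpose, det_reindex_self]
  · exact ⟨((Submodule.quotEquivOfEq _ _ hM'ρ').trans
      (ρ'.quotKerEquivOfSurjective hρ')).toAddEquiv, rfl⟩

theorem stmt18 (F : Type) [AddCommGroup F] [AddGroup.FG F]
    (u : F) (s : ℤ) (hs : s = -1 ∨ s = 0 ∨ s = 1)
    (hsF : s = 0 ↔ Infinite F) :
    ∃ (n : ℕ) (A : Matrix (Fin n) (Fin n) ℤ),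
      (∀ i j, 0 ≤ A i j) ∧
      (∀ i j, ∃ m : ℕ, 1 ≤ m ∧ 0 < (A ^ m) i j) ∧
      (1 - A).det.sign = s ∧
      ∃ Φ : ((Fin n → ℤ) ⧸ LinearMap.range (Matrix.toLin' (1 - Aᵀ))) ≃+ F,
        Φ (Submodule.Quotient.mk fun _ => 1) = u := by
  have : Module.Finite ℤ F := Module.Finite.iff_addGroup_fg.mpr ‹_›
  obtain ⟨m, π, hπ⟩ := Module.Finite.exists_fin' ℤ F
  obtain ⟨ρ, hρ, hρu, x, hxρ, hx⟩ := exists_surjective_one_eq_neg_mem_ker π hπ u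
  have hsK : -s = 0 ↔ Infinite (((Fin m ⊕ Fin m) ⊕ Unit → ℤ) ⧸ ker ρ) := by
    rw [neg_eq_zero, hsF, (ρ.quotKerEquivOfSurjective hρ).toEquiv.infinite_iff]
  obtain ⟨G, hG, hGs⟩ := exists_range_toLin'_eq_sign_det (ker ρ) (by omega) hsK
  obtain ⟨M, hMneg, hMdet, hMρ⟩ := exists_neg_matrix_range_toLin'_eq_comap G (hG ▸ hxρ) hx
  obtain ⟨n, A, hApos, hAdet, Φ, hΦ⟩ :=
    exists_pos_fin_matrix_of_neg M hMneg (ρ ∘ₗ funLeft ℤ ℤ Sum.inl)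
      (hρ.comp (funLeft_surjective_of_injective _ _ _ Sum.inl_injective))
      (by rw [hMρ, hG, ker_comp])
  refine ⟨n, A, fun i j => (hApos i j).le, fun i j => ⟨1, le_rfl, by simpa using hApos i j⟩,
    ?_, Φ, hΦ.trans hρu⟩
  rw [hAdet, hMdet, Int.sign_neg, hGs, neg_neg]
end
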